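/- For every set function w with w(∅)=0 there exists a partition P of N such that the associated hard clustering p ∈ Δ_N (defined by p_i^A = 1 for all A ∈ P and i ∈ A) satisfies W(p) = Σ_{A∈P} w(A) and W(p) ≥ W(q) for all q ∈ Δ_N. -/

import Mathlib

/-
If every point `i` picks a set `a i` independently with law `q i`, then, since
`f^w(x) = ∑_B μ^w(B) ∏_{i ∈ B} x_i` and `w(F) = ∑_{B ⊆ F} μ^w(B)`, expanding the products shows that
`W(q)` is the expected value of `∑_A w({i | a i = A})`, the value of the partition of `N` into the
nonempty fibres of `a`. Hence `W(q)` is a convex combination of partition values and never exceeds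
the best one, which the hard clustering of a best partition attains.
-/

open Finset

/-- Möbius inversion of a set function `w` on subsets of `N = Fin n`:
`μ^w(A) = ∑_{B ⊆ A} (−1)^{|A\B|} w(B)`. -/
def moebiusInv (n : ℕ) (w : Finset (Fin n) → ℝ) (A : Finset (Fin n)) : ℝ :=
  ∑ B ∈ A.powerset, (-1 : ℝ) ^ (A \ B).card * w B

/-- Multilinear extension of `w`: `f^w(x) = ∑_{B ⊆ N} (∏_{i ∈ B} x_i) μ^w(B)`. -/
def mle (n : ℕ) (w : Finset (Fin n) → ℝ) (x : Fin n → ℝ) : ℝ :=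
  ∑ B ∈ (univ : Finset (Fin n)).powerset, (∏ i ∈ B, x i) * moebiusInv n w B

/-- `q ∈ Δ_N`: `q i A` is the membership of data point `i` on subset `A`. -/
def IsMembership (n : ℕ) (q : Fin n → Finset (Fin n) → ℝ) : Prop :=
  (∀ i A, 0 ≤ q i A) ∧ (∀ i A, i ∉ A → q i A = 0) ∧
  (∀ i : Fin n, ∑ A ∈ univ.powerset.filter (fun A => i ∈ A), q i A = 1)

/-- Global score `W(q) = ∑_{∅ ≠ A ⊆ N} f^w(q^A)`. -/
def score (n : ℕ) (w : Finset (Fin n) → ℝ) (q : Fin n → Finset (Fin n) → ℝ) : ℝ :=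
  ∑ A ∈ univ.powerset.filter (fun A : Finset (Fin n) => A ≠ ∅),
    mle n w (fun i => q i A)

/-- `P` is a partition of `N = Fin n`. -/
def IsPartition (n : ℕ) (P : Finset (Finset (Fin n))) : Prop :=
  ∅ ∉ P ∧ (∀ A ∈ P, ∀ B ∈ P, A ≠ B → Disjoint A B) ∧ P.biUnion id = univ

/-- The hard clustering associated with a partition `P`: `p_i^A = 1` for all
`A ∈ P` and `i ∈ A`. -/
def hardClustering (n : ℕ) (P : Finset (Finset (Fin n))) :
    Fin n → Finset (Fin n) → ℝ :=
  fun i A => if A ∈ P ∧ i ∈ A then 1 else 0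

theorem sum_powerset_moebiusInv {n : ℕ} (w : Finset (Fin n) → ℝ) (S : Finset (Fin n)) :
    ∑ B ∈ S.powerset, moebiusInv n w B = w S := by
  have hsum_Icc : ∀ C ⊆ S, ∑ B ∈ Icc C S, (-1 : ℝ) ^ (B \ C).card = if C = S then 1 else 0 := by
    intro C hC
    have hdisj : ∀ D ∈ (S \ C).powerset, Disjoint C D := fun D hD =>
      disjoint_of_subset_right (mem_powerset.1 hD) disjoint_sdiff
    rw [Icc_eq_image_powerset hC, sum_image fun D₁ hD₁ D₂ hD₂ h => by
      rw [← union_sdiff_cancel_left (hdisj D₁ hD₁), h, union_sdiff_cancel_left (hdisj D₂ hD₂)]]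
    rw [sum_congr rfl fun D hD => by rw [union_sdiff_cancel_left (hdisj D hD)]]
    have := congrArg (Int.cast : ℤ → ℝ) (sum_powerset_neg_one_pow_card (x := S \ C))
    push_cast at this
    rw [this]
    exact if_congr (sdiff_eq_empty_iff_subset.trans
      ⟨fun h => subset_antisymm hC h, fun h => h ▸ subset_rfl⟩) rfl rfl
  unfold moebiusInv
  rw [sum_comm' (t' := S.powerset) (s' := fun C => Icc C S) (by intro B C; simp only [mem_powerset, mem_Icc]; tauto)]
  simp_rw [← sum_mul]
  rw [sum_congr rfl fun C hC => by rw [hsum_Icc C (mem_powerset.1 hC)]]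
  simp

theorem mle_indicator {n : ℕ} (w : Finset (Fin n) → ℝ) (S : Finset (Fin n)) :
    mle n w (fun i => if i ∈ S then 1 else 0) = w S := by
  simp only [mle, prod_boole, boole_mul, powerset_univ, ← subset_iff, ← sum_powerset_moebiusInv w S]
  rw [← sum_filter]
  congr 1
  ext B; simp

theorem sum_prod_mul_boole_forall_eq {ι κ R : Type*} [Fintype ι] [DecidableEq ι] [Fintype κ]
    [DecidableEq κ] [CommSemiring R] (q : ι → κ → R) (hq : ∀ i, ∑ k, q i k = 1)
    (B : Finset ι) (A : κ) :
    ∑ a : ι → κ, (∏ i, q i (a i)) * (if ∀ i ∈ B, a i = A then 1 else 0) = ∏ i ∈ B, q i A := by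
  let t : ι → Finset κ := fun i => if i ∈ B then {A} else univ
  have hfilter : univ.filter (fun a : ι → κ => ∀ i ∈ B, a i = A) = Fintype.piFinset t := by
    ext a; simp only [mem_filter, mem_univ, true_and, Fintype.mem_piFinset, t]
    refine forall_congr' fun i => ?_
    split_ifs <;> simp_all
  simp only [mul_boole, ← sum_filter, hfilter, ← prod_univ_sum, t]
  rw [← prod_subset (subset_univ B) fun i _ hi => by simp [hi, hq]]
  exact prod_congr rfl fun i hi => by simp [hi]

theorem sum_mle_eq_sum_prod_mul_sum_fiber {n : ℕ} (w : Finset (Fin n) → ℝ)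
    (q : Fin n → Finset (Fin n) → ℝ) (hq : ∀ i, ∑ A, q i A = 1) :
    ∑ A, mle n w (fun i => q i A) =
      ∑ a : Fin n → Finset (Fin n), (∏ i, q i (a i)) * ∑ A, w {i | a i = A} := by
  have hfiber : ∀ (a : Fin n → Finset (Fin n)) A,
      w {i | a i = A} = ∑ B, moebiusInv n w B * if ∀ i ∈ B, a i = A then 1 else 0 := by
    intro a A
    rw [← sum_powerset_moebiusInv w]
    simp only [mul_boole, ← sum_filter]
    congr 1
    ext B; simp [subset_iff]
  simp only [hfiber, mul_sum]
  rw [sum_comm]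
  refine sum_congr rfl fun A _ => ?_
  rw [sum_comm]
  simp only [mle, powerset_univ]
  refine sum_congr rfl fun B _ => ?_
  simp only [mul_left_comm _ (moebiusInv n w B), ← mul_sum]
  rw [mul_comm]
  congr 1
  -- `convert` reconciles the two `Decidable (∀ i ∈ B, a i = A)` instances.
  convert (sum_prod_mul_boole_forall_eq q hq B A).symm

theorem IsMembership.sum_eq_one {n : ℕ} {q : Fin n → Finset (Fin n) → ℝ}
    (hq : IsMembership n q) (i : Fin n) : ∑ A, q i A = 1 := by
  rw [← hq.2.2 i, powerset_univ, sum_filter_of_ne]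
  exact fun A _ hA => by_contra fun hiA => hA (hq.2.1 i A hiA)

theorem score_eq_sum_mle {n : ℕ} {w : Finset (Fin n) → ℝ} (hw0 : w ∅ = 0)
    {q : Fin n → Finset (Fin n) → ℝ} (hq : ∀ i, q i ∅ = 0) :
    score n w q = ∑ A, mle n w (fun i => q i A) := by
  have hmle_zero : mle n w (fun _ => 0) = 0 := by
    simpa [hw0] using mle_indicator w ∅
  rw [score, powerset_univ, sum_filter_of_ne]
  rintro A - hA rfl
  exact hA (by simpa only [hq] using hmle_zero)

theorem score_le_of_forall_sum_fiber_le {n : ℕ} {w : Finset (Fin n) → ℝ} (hw0 : w ∅ = 0)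
    {q : Fin n → Finset (Fin n) → ℝ} (hq : IsMembership n q) {c : ℝ}
    (h : ∀ a : Fin n → Finset (Fin n), ∑ A, w {i | a i = A} ≤ c) : score n w q ≤ c := by
  rw [score_eq_sum_mle hw0 fun i => hq.2.1 i ∅ (notMem_empty i),
    sum_mle_eq_sum_prod_mul_sum_fiber w q hq.sum_eq_one]
  calc _ ≤ ∑ a : Fin n → Finset (Fin n), (∏ i, q i (a i)) * c :=
        sum_le_sum fun a _ => mul_le_mul_of_nonneg_left (h a) (prod_nonneg fun i _ => hq.1 i _)
    _ = c := by rw [← sum_mul, ← Fintype.prod_sum, prod_eq_one fun i _ => hq.sum_eq_one i, one_mul]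

theorem score_hardClustering {n : ℕ} {w : Finset (Fin n) → ℝ} (hw0 : w ∅ = 0)
    (P : Finset (Finset (Fin n))) : score n w (hardClustering n P) = ∑ A ∈ P, w A := by
  have hpoint : ∀ A, mle n w (fun i => hardClustering n P i A) = if A ∈ P then w A else 0 := by
    intro A
    split_ifs with hA
    · simpa [hardClustering, hA] using mle_indicator w A
    · simpa [hardClustering, hA, hw0] using mle_indicator w ∅
  rw [score_eq_sum_mle hw0 fun i => by simp [hardClustering], sum_congr rfl fun A _ => hpoint A,
    sum_ite_mem, univ_inter]

theorem isMembership_hardClustering {n : ℕ} {P : Finset (Finset (Fin n))}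
    (hP : IsPartition n P) : IsMembership n (hardClustering n P) := by
  refine ⟨fun i A => ?_, fun i A hiA => if_neg fun h => hiA h.2, fun i => ?_⟩
  · unfold hardClustering; split_ifs <;> norm_num
  obtain ⟨A₀, hA₀, hiA₀⟩ : ∃ A₀ ∈ P, i ∈ A₀ := by
    have hi : i ∈ P.biUnion id := hP.2.2 ▸ mem_univ i
    simpa using hi
  rw [sum_eq_single_of_mem A₀ (by simp [hiA₀])]
  · exact if_pos ⟨hA₀, hiA₀⟩
  · exact fun A _ hA => if_neg fun h => disjoint_left.1 (hP.2.1 A h.1 A₀ hA₀ hA) h.2 hiA₀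

section fiberPartition

variable {n : ℕ} {κ : Type*} [DecidableEq κ]

def fiberPartition (a : Fin n → κ) : Finset (Finset (Fin n)) :=
  (univ.image a).image fun A => ({i | a i = A} : Finset (Fin n))

theorem mem_fiberPartition {a : Fin n → κ} {F : Finset (Fin n)} :
    F ∈ fiberPartition a ↔ ∃ i, ({j | a j = a i} : Finset (Fin n)) = F := by
  simp [fiberPartition, image_image]

theorem isPartition_fiberPartition (a : Fin n → κ) : IsPartition n (fiberPartition a) := by
  refine ⟨?_, ?_, ?_⟩
  · intro h
    obtain ⟨i, hi⟩ := mem_fiberPartition.1 h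
    exact notMem_empty i (hi ▸ mem_filter.2 ⟨mem_univ i, rfl⟩)
  · simp only [mem_fiberPartition]
    rintro - ⟨i, rfl⟩ - ⟨j, rfl⟩ hne
    exact disjoint_filter.2 fun k _ hi hj => hne (by rw [← hi, ← hj])
  · exact eq_univ_of_forall fun i => mem_biUnion.2 ⟨_, mem_fiberPartition.2 ⟨i, rfl⟩, by simp⟩

theorem sum_fiberPartition [Fintype κ] {w : Finset (Fin n) → ℝ} (hw0 : w ∅ = 0)
    (a : Fin n → κ) : ∑ F ∈ fiberPartition a, w F = ∑ A, w {i | a i = A} := by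
  rw [fiberPartition, sum_image, sum_subset (subset_univ (univ.image a))]
  · intro A _ hA
    rw [filter_eq_empty_iff.2 fun i _ hi => hA (mem_image.2 ⟨i, mem_univ i, hi⟩), hw0]
  · simp only [coe_image, coe_univ, Set.image_univ]
    rintro - ⟨i, rfl⟩ - ⟨j, rfl⟩ h
    have : i ∈ ({k | a k = a i} : Finset (Fin n)) := by simp
    simpa [h] using this

end fiberPartition

theorem exists_isPartition_forall_sum_le {n : ℕ} (w : Finset (Fin n) → ℝ) :
    ∃ P, IsPartition n P ∧ ∀ Q, IsPartition n Q → ∑ A ∈ Q, w A ≤ ∑ A ∈ P, w A := by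
  classical
  obtain ⟨P, hP, hmax⟩ := exists_max_image (univ.filter (IsPartition n)) (∑ A ∈ ·, w A)
    ⟨_, mem_filter.2 ⟨mem_univ _, isPartition_fiberPartition (fun i : Fin n => i)⟩⟩
  exact ⟨P, (mem_filter.1 hP).2, fun Q hQ => hmax Q (mem_filter.2 ⟨mem_univ _, hQ⟩)⟩

/-- for every set function `w` with `w(∅)=0` there is a partition
`P` of `N` whose associated hard clustering `p ∈ Δ_N` satisfies
`W(p) = ∑_{A∈P} w(A)` and `W(p) ≥ W(q)` for all `q ∈ Δ_N`. -/
theorem hard_clustering_maximizes (n : ℕ) (w : Finset (Fin n) → ℝ)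
    (hw0 : w ∅ = 0) :
    ∃ P : Finset (Finset (Fin n)), IsPartition n P ∧
      IsMembership n (hardClustering n P) ∧
      score n w (hardClustering n P) = ∑ A ∈ P, w A ∧
      ∀ q : Fin n → Finset (Fin n) → ℝ, IsMembership n q →
        score n w q ≤ score n w (hardClustering n P) := by
  obtain ⟨P, hP, hmax⟩ := exists_isPartition_forall_sum_le w
  refine ⟨P, hP, isMembership_hardClustering hP, score_hardClustering hw0 P, fun q hq => ?_⟩
  rw [score_hardClustering hw0 P]
  exact score_le_of_forall_sum_fiber_le hw0 hq fun a =>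
    sum_fiberPartition hw0 a ▸ hmax _ (isPartition_fiberPartition a)
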